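/- arXiv:2603.10067 — 4 statements merged into one kernel-verified Lean document; each statement's English description precedes it below -/
import Mathlib

section
/- For real matrices A, B ∈ ℝ^{m×n}, the trace inner product satisfies Tr(A^T B) ≤ Σ_{i=1}^{r} σ_i(A) σ_i(B), where r = min(m,n) and σ_i(·) denotes the i-th largest singular value. -/
/-!
Write `A = U_A Σ_A V_Aᵀ` and `B = U_B Σ_B V_Bᵀ`. Then `Tr(Aᵀ B) = σ_Aᵀ C σ_B`, where `C` is the
Hadamard product of `U_Aᵀ U_B` and `V_Aᵀ V_B`. By Bessel's inequality the rows and columns of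
both factors have norm at most one, so by AM-GM the rows and columns of `C` have absolute sums at
most one. Hence the block of `C` on the first `k` rows and first `t` columns sums to at most
`min k t`, which is exactly what the identity matrix gives. Abel summation against the
nonincreasing sequences `σ_A` and `σ_B` turns these block bounds into
`σ_Aᵀ C σ_B ≤ σ_Aᵀ σ_B`.
-/

open Matrix

/-- `IsSVD M U σ V` asserts that `M = U · diag σ · Vᵀ` is a (thin) singular value
decomposition of `M`: `U` and `V` have orthonormal columns and `σ` lists the
singular values in nonincreasing order. -/
def IsSVD {m n r : ℕ} (M : Matrix (Fin m) (Fin n) ℝ)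
    (U : Matrix (Fin m) (Fin r) ℝ) (σ : Fin r → ℝ) (V : Matrix (Fin n) (Fin r) ℝ) : Prop :=
  Uᵀ * U = 1 ∧ Vᵀ * V = 1 ∧ (∀ i, 0 ≤ σ i) ∧ Antitone σ ∧ M = U * Matrix.diagonal σ * Vᵀ

open Finset

variable {ι κ m n r : Type*}

theorem AntitoneOn.sum_mul_le_sum_mul_of_prefix_sum_le [LinearOrder ι]
    {s : Finset ι} {a x y : ι → ℝ} (ha : AntitoneOn a s) (ha0 : ∀ i ∈ s, 0 ≤ a i)
    (hxy : ∀ k ∈ s, ∑ i ∈ s with i ≤ k, x i ≤ ∑ i ∈ s with i ≤ k, y i) :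
    ∑ i ∈ s, a i * x i ≤ ∑ i ∈ s, a i * y i := by
  classical
  induction s using Finset.induction_on_max generalizing a with
  | empty => simp
  | insert t s ht ih =>
    have hts : t ∉ s := fun h => lt_irrefl _ (ht t h)
    -- `a t` is the smallest weight; what remains are the weights `a - a t`, supported on `s`.
    have peel (z : ι → ℝ) : ∑ i ∈ insert t s, a i * z i
        = a t * ∑ i ∈ insert t s, z i + ∑ i ∈ s, (a i - a t) * z i := by
      simp only [sum_insert hts, mul_add, mul_sum, sub_mul, sum_sub_distrib]
      ring
    have htotal : ∑ i ∈ insert t s, x i ≤ ∑ i ∈ insert t s, y i := by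
      have := hxy t (mem_insert_self t s)
      rwa [filter_true_of_mem fun i hi => ?_] at this
      rcases mem_insert.mp hi with rfl | hi
      exacts [le_rfl, (ht i hi).le]
    have hprefix : ∀ k ∈ s, ∀ z : ι → ℝ,
        ∑ i ∈ insert t s with i ≤ k, z i = ∑ i ∈ s with i ≤ k, z i := by
      intro k hk z
      rw [filter_insert, if_neg (not_le.mpr (ht k hk))]
    rw [peel x, peel y]
    refine add_le_add (mul_le_mul_of_nonneg_left htotal (ha0 t (mem_insert_self t s))) ?_
    refine ih (fun i hi j hj hij => ?_) (fun i hi => ?_) (fun k hk => ?_)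
    · have := ha (mem_insert_of_mem hi) (mem_insert_of_mem hj) hij
      linarith
    · exact sub_nonneg.mpr (ha (mem_insert_of_mem hi) (mem_insert_self t s) (ht i hi).le)
    · rw [← hprefix k hk, ← hprefix k hk]
      exact hxy k (mem_insert_of_mem hk)

theorem Matrix.sum_sum_le_card_of_sum_abs_row_le_one [Fintype κ] {C : Matrix ι κ ℝ}
    (hrow : ∀ i, ∑ j, |C i j| ≤ 1) (S : Finset ι) (T : Finset κ) :
    ∑ i ∈ S, ∑ j ∈ T, C i j ≤ #S :=
  calc ∑ i ∈ S, ∑ j ∈ T, C i j ≤ ∑ i ∈ S, ∑ j, |C i j| :=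
        sum_le_sum fun i _ => (sum_le_sum fun j _ => le_abs_self _).trans <|
          sum_le_sum_of_subset_of_nonneg (subset_univ T) fun j _ _ => abs_nonneg _
    _ ≤ ∑ _i ∈ S, 1 := sum_le_sum fun i _ => hrow i
    _ = #S := by simp

theorem Matrix.vecMul_dotProduct_le_dotProduct_of_antitone [Fintype ι] [LinearOrder ι]
    {a b : ι → ℝ} {C : Matrix ι ι ℝ}
    (ha : Antitone a) (ha0 : 0 ≤ a) (hb : Antitone b) (hb0 : 0 ≤ b)
    (hrow : ∀ i, ∑ j, |C i j| ≤ 1) (hcol : ∀ j, ∑ i, |C i j| ≤ 1) :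
    a ᵥ* C ⬝ᵥ b ≤ a ⬝ᵥ b := by
  have hblock (k t : ι) : ∑ j with j ≤ t, ∑ i with i ≤ k, C i j
      ≤ ∑ j with j ≤ t, if j ≤ k then (1 : ℝ) else 0 := by
    rw [sum_boole, filter_filter]
    rcases le_total t k with htk | hkt
    · rw [filter_congr fun j _ => and_iff_left_of_imp fun hjt => hjt.trans htk]
      exact sum_sum_le_card_of_sum_abs_row_le_one (C := Cᵀ) hcol _ _
    · rw [filter_congr fun j _ => and_iff_right_of_imp fun hjk => hjk.trans hkt, sum_comm]
      exact sum_sum_le_card_of_sum_abs_row_le_one hrow _ _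
  rw [← dotProduct_mulVec]
  refine (ha.antitoneOn _).sum_mul_le_sum_mul_of_prefix_sum_le (fun i _ => ha0 i) fun k _ => ?_
  have hlhs : ∑ i with i ≤ k, (C *ᵥ b) i = ∑ j, b j * ∑ i with i ≤ k, C i j := by
    simp only [mulVec, dotProduct, mul_sum]
    rw [sum_comm]
    simp only [mul_comm]
  have hrhs : ∑ i with i ≤ k, b i = ∑ j, b j * if j ≤ k then 1 else 0 := by
    simp [sum_filter]
  rw [hlhs, hrhs]
  exact (hb.antitoneOn _).sum_mul_le_sum_mul_of_prefix_sum_le (fun j _ => hb0 j)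
    fun t _ => hblock k t

theorem Matrix.vecMul_dotProduct_vecMul_le [Fintype m] [Fintype r] [DecidableEq r]
    {W : Matrix m r ℝ} (hW : Wᵀ * W = 1) (x : m → ℝ) : x ᵥ* W ⬝ᵥ x ᵥ* W ≤ x ⬝ᵥ x := by
  set y := x ᵥ* W
  have hWy : W *ᵥ y ⬝ᵥ W *ᵥ y = y ⬝ᵥ y := by
    rw [dotProduct_mulVec, ← vecMul_transpose, vecMul_vecMul, hW, vecMul_one]
  have hres : 0 ≤ (x - W *ᵥ y) ⬝ᵥ (x - W *ᵥ y) := by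
    simpa using dotProduct_self_star_nonneg (x - W *ᵥ y)
  rw [sub_dotProduct, dotProduct_sub, dotProduct_sub, hWy, dotProduct_comm (W *ᵥ y) x,
    dotProduct_mulVec] at hres
  linarith

theorem Matrix.dotProduct_self_transpose_mul_apply_le_one [Fintype m] [Fintype n] [DecidableEq n]
    [DecidableEq r] {U : Matrix m r ℝ} {W : Matrix m n ℝ} (hU : Uᵀ * U = 1) (hW : Wᵀ * W = 1)
    (k : r) : (Uᵀ * W) k ⬝ᵥ (Uᵀ * W) k ≤ 1 :=
  calc (Uᵀ * W) k ⬝ᵥ (Uᵀ * W) k = Uᵀ k ᵥ* W ⬝ᵥ Uᵀ k ᵥ* W := rfl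
    _ ≤ (Uᵀ * U) k k := vecMul_dotProduct_vecMul_le hW _
    _ = 1 := by rw [hU, one_apply_eq]

theorem Matrix.sum_abs_hadamard_apply_le_one [Fintype n] {P Q : Matrix r n ℝ} {k : r}
    (hP : P k ⬝ᵥ P k ≤ 1) (hQ : Q k ⬝ᵥ Q k ≤ 1) : ∑ l, |(P ⊙ Q) k l| ≤ 1 := by
  calc ∑ l, |(P ⊙ Q) k l| ≤ ∑ l, (P k l * P k l + Q k l * Q k l) / 2 := by
        refine sum_le_sum fun l _ => ?_
        rw [hadamard_apply, abs_mul, ← abs_mul_abs_self (P k l), ← abs_mul_abs_self (Q k l)]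
        nlinarith [two_mul_le_add_sq |P k l| |Q k l|]
    _ = (P k ⬝ᵥ P k + Q k ⬝ᵥ Q k) / 2 := by
        simp only [dotProduct, ← sum_div, sum_add_distrib]
    _ ≤ 1 := by linarith

theorem Matrix.trace_transpose_mul_eq_vecMul_hadamard_dotProduct [Fintype m] [Fintype n]
    [Fintype r] [DecidableEq r] (UA UB : Matrix m r ℝ) (σA σB : r → ℝ) (VA VB : Matrix n r ℝ) :
    trace ((UA * diagonal σA * VAᵀ)ᵀ * (UB * diagonal σB * VBᵀ))
      = σA ᵥ* ((UAᵀ * UB) ⊙ (VAᵀ * VB)) ⬝ᵥ σB := by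
  rw [dotProduct_vecMul_hadamard]
  simp only [transpose_mul, transpose_transpose, diagonal_transpose, Matrix.mul_assoc]
  rw [trace_mul_comm VA]
  simp only [Matrix.mul_assoc]

/-- **Von Neumann trace inequality.** For `A, B ∈ ℝ^{m×n}` with singular values
`σA` and `σB` (in nonincreasing order), `Tr(Aᵀ B) ≤ ∑_{i=1}^{r} σA_i σB_i`
where `r = min(m, n)`. -/
theorem vonNeumann_trace_inequality (m n : ℕ) (A B : Matrix (Fin m) (Fin n) ℝ)
    (UA : Matrix (Fin m) (Fin (min m n)) ℝ) (σA : Fin (min m n) → ℝ)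
    (VA : Matrix (Fin n) (Fin (min m n)) ℝ)
    (UB : Matrix (Fin m) (Fin (min m n)) ℝ) (σB : Fin (min m n) → ℝ)
    (VB : Matrix (Fin n) (Fin (min m n)) ℝ)
    (hA : IsSVD A UA σA VA) (hB : IsSVD B UB σB VB) :
    Matrix.trace (Aᵀ * B) ≤ ∑ i, σA i * σB i := by
  obtain ⟨hUA, hVA, hσA_nonneg, hσA_anti, rfl⟩ := hA
  obtain ⟨hUB, hVB, hσB_nonneg, hσB_anti, rfl⟩ := hB
  have hP_row := dotProduct_self_transpose_mul_apply_le_one hUA hUB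
  have hP_col := dotProduct_self_transpose_mul_apply_le_one hUB hUA
  have hQ_row := dotProduct_self_transpose_mul_apply_le_one hVA hVB
  have hQ_col := dotProduct_self_transpose_mul_apply_le_one hVB hVA
  rw [← transpose_transpose UA, ← transpose_mul] at hP_col
  rw [← transpose_transpose VA, ← transpose_mul] at hQ_col
  rw [trace_transpose_mul_eq_vecMul_hadamard_dotProduct]
  exact vecMul_dotProduct_le_dotProduct_of_antitone hσA_anti hσA_nonneg hσB_anti hσB_nonneg
    (fun k => sum_abs_hadamard_apply_le_one (hP_row k) (hQ_row k))
    (fun l => sum_abs_hadamard_apply_le_one (hP_col l) (hQ_col l))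
end

section
/- Let G ∈ ℝ^{m×n} be nonzero with SVD G = U Σ V^T, Σ = diag(σ_1,…,σ_r). Fix q ∈ (1,∞) with conjugate exponent p′ (1/p′ + 1/q = 1) and δ > 0. Then the maximizer of Tr(G^T ΔW) over matrices ΔW with Schatten-q norm at most δ is ΔW* = δ · ‖G‖_{p′}^{-p′/q} · U Σ^{p′-1} V^T, where Σ^{p′-1} = diag(σ_1^{p′-1},…,σ_r^{p′-1}). -/
/-!
Write `G = U diag σ Vᵀ`, `ΔW = U_W diag σ_W V_Wᵀ`, `X = Uᵀ U_W` and `Y = Vᵀ V_W`. Then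
`tr (Gᵀ ΔW) = ∑ i j, σ i σ_W j X i j Y i j`. By Bessel's inequality every row and column of
`X ∘ X` and of `Y ∘ Y` has sum at most `1`, so `(X ∘ X + Y ∘ Y) / 2` is doubly substochastic, and
it dominates `X ∘ Y` entrywise. Hölder's inequality on the product index set, weighted by this
matrix, gives `tr (Gᵀ ΔW) ≤ ‖σ‖_{p'} ‖σ_W‖_q`. The proposed maximizer has singular values
`c σ^{p'-1}` with `c = δ / ‖σ‖_{p'}^{p'/q}`, the vector of `q`-norm `δ` attaining equality in the
scalar Hölder inequality, so its trace against `G` is `δ ‖σ‖_{p'}`.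
-/

open Matrix

section SchattenHolder

variable {m n ι κ : Type*} [Fintype m] [Fintype n]

theorem Matrix.orthonormal_col_of_transpose_mul_self_eq_one [DecidableEq ι]
    {U : Matrix m ι ℝ} (hU : Uᵀ * U = 1) :
    Orthonormal ℝ (fun i => WithLp.toLp 2 (Uᵀ i) : ι → EuclideanSpace ℝ m) := by
  rw [orthonormal_iff_ite]
  intro i j
  simpa [mul_apply, one_apply, PiLp.inner_apply, mul_comm] using congr_fun (congr_fun hU i) j

variable [Fintype κ]

theorem Matrix.sum_sq_transpose_mul_apply_le_one [DecidableEq ι] [DecidableEq κ]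
    {U : Matrix m ι ℝ} {U' : Matrix m κ ℝ} (hU : Uᵀ * U = 1) (hU' : U'ᵀ * U' = 1) (i : ι) :
    ∑ j, (Uᵀ * U') i j ^ 2 ≤ 1 := by
  have hbessel := (orthonormal_col_of_transpose_mul_self_eq_one hU').sum_inner_products_le
    (WithLp.toLp 2 (Uᵀ i)) (s := Finset.univ)
  rw [(orthonormal_col_of_transpose_mul_self_eq_one hU).1 i, one_pow] at hbessel
  simpa [mul_apply, PiLp.inner_apply, mul_comm] using hbessel

variable [Fintype ι]

theorem inner_le_Lp_mul_Lq_of_doublySubstochastic {w : ι → κ → ℝ} (hw : ∀ i j, 0 ≤ w i j)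
    (hrow : ∀ i, ∑ j, w i j ≤ 1) (hcol : ∀ j, ∑ i, w i j ≤ 1) {a : ι → ℝ} {b : κ → ℝ}
    (ha : ∀ i, 0 ≤ a i) (hb : ∀ j, 0 ≤ b j) {p q : ℝ} (hpq : p.HolderConjugate q) :
    ∑ i, ∑ j, w i j * a i * b j ≤ (∑ i, a i ^ p) ^ (1 / p) * (∑ j, b j ^ q) ^ (1 / q) := by
  set f : ι × κ → ℝ := fun x => w x.1 x.2 ^ (1 / p) * a x.1
  set g : ι × κ → ℝ := fun x => w x.1 x.2 ^ (1 / q) * b x.2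
  have hf : ∀ x, 0 ≤ f x := fun x => mul_nonneg (Real.rpow_nonneg (hw _ _) _) (ha _)
  have hg : ∀ x, 0 ≤ g x := fun x => mul_nonneg (Real.rpow_nonneg (hw _ _) _) (hb _)
  have hpow : ∀ {r : ℝ}, 0 < r → ∀ i j {c : ℝ}, 0 ≤ c →
      (w i j ^ (1 / r) * c) ^ r = w i j * c ^ r := by
    intro r hr i j c hc
    rw [Real.mul_rpow (Real.rpow_nonneg (hw i j) _) hc, ← Real.rpow_mul (hw i j),
      one_div_mul_cancel hr.ne', Real.rpow_one]
  have hfp : ∑ x, f x ^ p ≤ ∑ i, a i ^ p := by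
    simp only [f, hpow hpq.pos _ _ (ha _), ← Finset.univ_product_univ, Finset.sum_product,
      ← Finset.sum_mul]
    exact Finset.sum_le_sum fun i _ => mul_le_of_le_one_left (Real.rpow_nonneg (ha i) _) (hrow i)
  have hgq : ∑ x, g x ^ q ≤ ∑ j, b j ^ q := by
    simp only [g, hpow hpq.symm.pos _ _ (hb _), ← Finset.univ_product_univ,
      Finset.sum_product_right, ← Finset.sum_mul]
    exact Finset.sum_le_sum fun j _ => mul_le_of_le_one_left (Real.rpow_nonneg (hb j) _) (hcol j)
  have hF : 0 ≤ ∑ x, f x ^ p := Finset.sum_nonneg fun x _ => Real.rpow_nonneg (hf x) p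
  have hG : 0 ≤ ∑ x, g x ^ q := Finset.sum_nonneg fun x _ => Real.rpow_nonneg (hg x) q
  calc ∑ i, ∑ j, w i j * a i * b j = ∑ x, f x * g x := by
        rw [← Finset.univ_product_univ, Finset.sum_product]
        refine Finset.sum_congr rfl fun i _ => Finset.sum_congr rfl fun j _ => ?_
        rw [mul_mul_mul_comm, ← Real.rpow_add' (hw i j) (by simp [hpq.inv_add_inv_eq_one]),
          one_div, one_div, hpq.inv_add_inv_eq_one, Real.rpow_one, mul_assoc]
    _ ≤ (∑ x, f x ^ p) ^ (1 / p) * (∑ x, g x ^ q) ^ (1 / q) :=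
        Real.inner_le_Lp_mul_Lq_of_nonneg _ hpq (fun x _ => hf x) (fun x _ => hg x)
    _ ≤ (∑ i, a i ^ p) ^ (1 / p) * (∑ j, b j ^ q) ^ (1 / q) :=
        mul_le_mul (Real.rpow_le_rpow hF hfp (one_div_nonneg.2 hpq.nonneg))
          (Real.rpow_le_rpow hG hgq (one_div_nonneg.2 hpq.symm.nonneg))
          (Real.rpow_nonneg hG _) (Real.rpow_nonneg (hF.trans hfp) _)

variable [DecidableEq ι] [DecidableEq κ]

theorem Matrix.trace_transpose_mul_eq_sum (U : Matrix m ι ℝ) (a : ι → ℝ) (V : Matrix n ι ℝ)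
    (U' : Matrix m κ ℝ) (b : κ → ℝ) (V' : Matrix n κ ℝ) :
    trace ((U * diagonal a * Vᵀ)ᵀ * (U' * diagonal b * V'ᵀ)) =
      ∑ i, ∑ j, a i * b j * (Uᵀ * U') i j * (Vᵀ * V') i j := by
  have hcycle : (U * diagonal a * Vᵀ)ᵀ * (U' * diagonal b * V'ᵀ) =
      V * (diagonal a * (Uᵀ * U') * diagonal b * V'ᵀ) := by
    simp only [transpose_mul, transpose_transpose, diagonal_transpose, Matrix.mul_assoc]
  rw [hcycle, trace_mul_comm, Matrix.mul_assoc _ V'ᵀ, ← transpose_transpose (V'ᵀ * V),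
    transpose_mul, transpose_transpose]
  refine Finset.sum_congr rfl fun i _ => Finset.sum_congr rfl fun j _ => ?_
  simp only [transpose_apply, mul_diagonal, diagonal_mul]
  ring

theorem Matrix.trace_transpose_mul_self_eq_sum {U : Matrix m ι ℝ} {V : Matrix n ι ℝ}
    (hU : Uᵀ * U = 1) (hV : Vᵀ * V = 1) (a b : ι → ℝ) :
    trace ((U * diagonal a * Vᵀ)ᵀ * (U * diagonal b * Vᵀ)) = ∑ i, a i * b i := by
  rw [trace_transpose_mul_eq_sum, hU, hV]
  simp [one_apply]

theorem Matrix.trace_transpose_mul_le_Lp_mul_Lq {U : Matrix m ι ℝ} {V : Matrix n ι ℝ}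
    {U' : Matrix m κ ℝ} {V' : Matrix n κ ℝ} (hU : Uᵀ * U = 1) (hV : Vᵀ * V = 1)
    (hU' : U'ᵀ * U' = 1) (hV' : V'ᵀ * V' = 1) {a : ι → ℝ} {b : κ → ℝ}
    (ha : ∀ i, 0 ≤ a i) (hb : ∀ j, 0 ≤ b j) {p q : ℝ} (hpq : p.HolderConjugate q) :
    trace ((U * diagonal a * Vᵀ)ᵀ * (U' * diagonal b * V'ᵀ)) ≤
      (∑ i, a i ^ p) ^ (1 / p) * (∑ j, b j ^ q) ^ (1 / q) := by
  set X := Uᵀ * U'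
  set Y := Vᵀ * V'
  have hXt : ∀ i j, X i j = (U'ᵀ * U) j i := fun i j => by simp [X, mul_apply, mul_comm]
  have hYt : ∀ i j, Y i j = (V'ᵀ * V) j i := fun i j => by simp [Y, mul_apply, mul_comm]
  let w i j := (X i j ^ 2 + Y i j ^ 2) / 2
  have hrow : ∀ i, ∑ j, w i j ≤ 1 := fun i => by
    rw [← Finset.sum_div, Finset.sum_add_distrib]
    linarith [sum_sq_transpose_mul_apply_le_one hU hU' i,
      sum_sq_transpose_mul_apply_le_one hV hV' i]
  have hcol : ∀ j, ∑ i, w i j ≤ 1 := fun j => by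
    rw [← Finset.sum_div, Finset.sum_add_distrib]
    simp only [hXt, hYt]
    linarith [sum_sq_transpose_mul_apply_le_one hU' hU j,
      sum_sq_transpose_mul_apply_le_one hV' hV j]
  calc trace ((U * diagonal a * Vᵀ)ᵀ * (U' * diagonal b * V'ᵀ))
      = ∑ i, ∑ j, a i * b j * X i j * Y i j := trace_transpose_mul_eq_sum ..
    _ ≤ ∑ i, ∑ j, w i j * a i * b j := by
        refine Finset.sum_le_sum fun i _ => Finset.sum_le_sum fun j _ => ?_
        have hXY : X i j * Y i j ≤ w i j := by
          simp only [w]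
          nlinarith [sq_nonneg (X i j - Y i j)]
        calc a i * b j * X i j * Y i j = a i * b j * (X i j * Y i j) := by ring
          _ ≤ a i * b j * w i j := mul_le_mul_of_nonneg_left hXY (mul_nonneg (ha i) (hb j))
          _ = w i j * a i * b j := by ring
    _ ≤ _ := inner_le_Lp_mul_Lq_of_doublySubstochastic
        (fun i j => by positivity) hrow hcol ha hb hpq

end SchattenHolder

section HolderExtremal

variable {ι : Type*} [Fintype ι] {σ : ι → ℝ} {p q : ℝ}

theorem sum_rpow_pos_of_ne_zero (hσ : ∀ i, 0 ≤ σ i) (hσ0 : σ ≠ 0) (p : ℝ) :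
    0 < ∑ i, σ i ^ p := by
  obtain ⟨i, hi⟩ := Function.ne_iff.1 hσ0
  exact Finset.sum_pos' (fun j _ => Real.rpow_nonneg (hσ j) p)
    ⟨i, Finset.mem_univ i, Real.rpow_pos_of_pos ((hσ i).lt_of_ne' hi) p⟩

theorem Lq_norm_holder_extremal_eq (hpq : p.HolderConjugate q) (hσ : ∀ i, 0 ≤ σ i)
    (hs : 0 < ∑ i, σ i ^ p) {δ : ℝ} (hδ : 0 ≤ δ) :
    (∑ i, (δ / (∑ j, σ j ^ p) ^ (1 / q) * σ i ^ (p - 1)) ^ q) ^ (1 / q) = δ := by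
  set s := ∑ j, σ j ^ p
  set c := δ / s ^ (1 / q) with hc_def
  have hc : 0 ≤ c := by positivity
  have hterm : ∀ i, (c * σ i ^ (p - 1)) ^ q = c ^ q * σ i ^ p := fun i => by
    rw [Real.mul_rpow hc (Real.rpow_nonneg (hσ i) _), ← Real.rpow_mul (hσ i),
      hpq.sub_one_mul_conj]
  rw [Finset.sum_congr rfl fun i _ => hterm i, ← Finset.mul_sum,
    Real.mul_rpow (Real.rpow_nonneg hc q) hs.le, one_div q,
    Real.rpow_rpow_inv hc hpq.symm.ne_zero, ← one_div, hc_def,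
    div_mul_cancel₀ _ (Real.rpow_pos_of_pos hs _).ne']

theorem inner_holder_extremal_eq (hpq : p.HolderConjugate q) (hσ : ∀ i, 0 ≤ σ i)
    (hs : 0 < ∑ i, σ i ^ p) (δ : ℝ) :
    δ / (∑ j, σ j ^ p) ^ (1 / q) * ∑ i, σ i * σ i ^ (p - 1) = (∑ i, σ i ^ p) ^ (1 / p) * δ := by
  set s := ∑ j, σ j ^ p
  have hsplit : s ^ (1 / p) * s ^ (1 / q) = s := by
    rw [← Real.rpow_add hs, one_div, one_div, hpq.inv_add_inv_eq_one, Real.rpow_one]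
  have hσσ : ∀ i, σ i * σ i ^ (p - 1) = σ i ^ p := fun i => by
    rw [← Real.rpow_one_add' (hσ i) (by simp [hpq.ne_zero]), add_sub_cancel]
  rw [Finset.sum_congr rfl fun i _ => hσσ i, div_mul_eq_mul_div,
    div_eq_iff (Real.rpow_pos_of_pos hs _).ne']
  rw [mul_right_comm, hsplit]
  exact mul_comm _ _

end HolderExtremal

/-- **Schatten-q constrained steepest ascent.** Let `G ≠ 0` have SVD `G = U Σ Vᵀ`,
let `q ∈ (1, ∞)` with conjugate exponent `p'` (`1/p' + 1/q = 1`) and `δ > 0`.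
Then `ΔW* = δ ‖G‖_{p'}^{-p'/q} U Σ^{p'-1} Vᵀ` has Schatten-q norm exactly `δ`
and maximizes `Tr(Gᵀ ΔW)` over all `ΔW` of Schatten-q norm at most `δ`. -/
theorem schatten_q_constrained_maximizer (m n : ℕ) (G : Matrix (Fin m) (Fin n) ℝ)
    (hG : G ≠ 0)
    (U : Matrix (Fin m) (Fin (min m n)) ℝ) (σ : Fin (min m n) → ℝ)
    (V : Matrix (Fin n) (Fin (min m n)) ℝ) (hsvd : IsSVD G U σ V)
    (q p' δ : ℝ) (hq : 1 < q) (hconj : 1 / p' + 1 / q = 1) (hδ : 0 < δ) :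
    (∑ i, ((δ / ((∑ i, σ i ^ p') ^ (1 / p')) ^ (p' / q)) * σ i ^ (p' - 1)) ^ q) ^ (1 / q)
        = δ ∧
    ∀ (ΔW : Matrix (Fin m) (Fin n) ℝ)
      (UW : Matrix (Fin m) (Fin (min m n)) ℝ) (σW : Fin (min m n) → ℝ)
      (VW : Matrix (Fin n) (Fin (min m n)) ℝ),
      IsSVD ΔW UW σW VW → (∑ i, σW i ^ q) ^ (1 / q) ≤ δ →
      Matrix.trace (Gᵀ * ΔW) ≤
        Matrix.trace (Gᵀ *
          ((δ / ((∑ i, σ i ^ p') ^ (1 / p')) ^ (p' / q)) •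
            (U * Matrix.diagonal (fun i => σ i ^ (p' - 1)) * Vᵀ))) := by
  obtain ⟨hU, hV, hσ, -, rfl⟩ := hsvd
  have hpq : p'.HolderConjugate q :=
    (Real.holderConjugate_iff.2 ⟨hq, by simpa [one_div, add_comm] using hconj⟩).symm
  have hs : 0 < ∑ i, σ i ^ p' := sum_rpow_pos_of_ne_zero hσ (by rintro rfl; simp at hG) p'
  have hnorm : ((∑ i, σ i ^ p') ^ (1 / p')) ^ (p' / q) = (∑ i, σ i ^ p') ^ (1 / q) := by
    rw [← Real.rpow_mul hs.le]
    field_simp [hpq.ne_zero]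
  rw [hnorm]
  refine ⟨Lq_norm_holder_extremal_eq hpq hσ hs hδ.le, ?_⟩
  rintro _ UW σW VW ⟨hUW, hVW, hσW, -, rfl⟩ hσW_norm
  rw [Matrix.mul_smul, trace_smul, trace_transpose_mul_self_eq_sum hU hV, smul_eq_mul,
    inner_holder_extremal_eq hpq hσ hs]
  calc trace ((U * diagonal σ * Vᵀ)ᵀ * (UW * diagonal σW * VWᵀ))
      ≤ (∑ i, σ i ^ p') ^ (1 / p') * (∑ i, σW i ^ q) ^ (1 / q) :=
        trace_transpose_mul_le_Lp_mul_Lq hU hV hUW hVW hσ hσW hpq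
    _ ≤ (∑ i, σ i ^ p') ^ (1 / p') * δ := by gcongr
end

section
/- Let f be L-smooth (Frobenius), M ∈ ℝ^{m×n}, ρ(M) = U Σ^p V^T, η = ⟨M, ρ(M)⟩/(L‖ρ(M)‖_F^2), and ε′ ∈ (0,1). Then f(W) − f(W − η ρ(M)) ≥ (1−ε′)/(2L) · ⟨M, ρ(M)⟩^2/‖ρ(M)‖_F^2 − ‖M − ∇f(W)‖_F^2/(2Lε′). -/
open Matrix

attribute [local instance] Matrix.normedAddCommGroup Matrix.normedSpace

/-- Squared Frobenius norm, `‖A‖_F² = ∑_{i,j} A_{ij}²`. -/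
noncomputable def frobSq {m n : ℕ} (A : Matrix (Fin m) (Fin n) ℝ) : ℝ :=
  ∑ i, ∑ j, (A i j) ^ (2 : ℕ)

/-- Frobenius norm. -/
noncomputable def fnorm {m n : ℕ} (A : Matrix (Fin m) (Fin n) ℝ) : ℝ :=
  Real.sqrt (frobSq A)

/-- The continuous linear map `X ↦ Tr(Aᵀ X) = ⟨A, X⟩` given by the Frobenius
inner product against `A`. -/
noncomputable def traceCLM {m n : ℕ} (A : Matrix (Fin m) (Fin n) ℝ) :
    Matrix (Fin m) (Fin n) ℝ →L[ℝ] ℝ :=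
  LinearMap.toContinuousLinearMap
    { toFun := fun X => Matrix.trace (Aᵀ * X)
      map_add' := by intro X Y; simp [Matrix.mul_add]
      map_smul' := by intro c X; simp [Matrix.mul_smul] }

/-! The descent lemma for an `L`-smooth `f` gives
`f W - f (W - η • ρ) ≥ η ⟨∇f W, ρ⟩ - L η² ‖ρ‖² / 2`. Writing `⟨∇f W, ρ⟩ = ⟨M, ρ⟩ - ⟨M - ∇f W, ρ⟩`,
the chosen `η` turns the right-hand side into `(⟨M, ρ⟩² - 2 ⟨M, ρ⟩ ⟨M - ∇f W, ρ⟩) / (2 L ‖ρ‖²)`;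
the cross term is bounded by Cauchy–Schwarz and then Young's inequality `2ab ≤ ε' a² + b² / ε'`. -/

theorem le_add_deriv_add_of_deriv_sub_le {φ φ' : ℝ → ℝ} {K : ℝ}
    (hφ : ∀ t, HasDerivAt φ (φ' t) t) (hK : ∀ t ∈ Set.Ioo (0 : ℝ) 1, φ' t - φ' 0 ≤ K * t) :
    φ 1 ≤ φ 0 + φ' 0 + K / 2 := by
  set χ : ℝ → ℝ := fun t => φ 0 + φ' 0 * t + K / 2 * t ^ 2 - φ t
  have hχ : ∀ t, HasDerivAt χ (φ' 0 + K * t - φ' t) t := fun t =>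
    (((((hasDerivAt_id t).const_mul (φ' 0)).const_add (φ 0)).add
      ((hasDerivAt_pow 2 t).const_mul (K / 2))).sub (hφ t)).congr_deriv (by push_cast; ring)
  have hχ_mono : MonotoneOn χ (Set.Icc 0 1) :=
    monotoneOn_of_hasDerivWithinAt_nonneg (convex_Icc 0 1)
      (fun t _ => (hχ t).continuousAt.continuousWithinAt) (fun t _ => (hχ t).hasDerivWithinAt)
      (fun t ht => by rw [interior_Icc] at ht; linarith [hK t ht])
  have := hχ_mono (by simp) (by simp) zero_le_one
  simp only [χ] at this
  linarith

section Frobenius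

variable {m n : ℕ}

theorem trace_transpose_mul_eq_sum (A B : Matrix (Fin m) (Fin n) ℝ) :
    trace (Aᵀ * B) = ∑ i, ∑ j, A i j * B i j := by
  simp only [trace, diag, mul_apply, transpose_apply]
  exact Finset.sum_comm

theorem frobSq_nonneg (A : Matrix (Fin m) (Fin n) ℝ) : 0 ≤ frobSq A := by
  unfold frobSq
  positivity

theorem frobSq_pos {A : Matrix (Fin m) (Fin n) ℝ} (hA : A ≠ 0) : 0 < frobSq A := by
  refine (frobSq_nonneg A).lt_of_ne' fun h => hA ?_
  ext i j
  have hrow := (Finset.sum_eq_zero_iff_of_nonneg (fun i _ => by positivity)).mp h i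
    (Finset.mem_univ i)
  simpa using (Finset.sum_eq_zero_iff_of_nonneg (fun j _ => by positivity)).mp hrow j
    (Finset.mem_univ j)

theorem fnorm_mul_self (A : Matrix (Fin m) (Fin n) ℝ) : fnorm A * fnorm A = frobSq A :=
  Real.mul_self_sqrt (frobSq_nonneg A)

theorem frobSq_smul (c : ℝ) (A : Matrix (Fin m) (Fin n) ℝ) :
    frobSq (c • A) = c ^ 2 * frobSq A := by
  simp [frobSq, Finset.mul_sum, mul_pow]

theorem fnorm_smul (c : ℝ) (A : Matrix (Fin m) (Fin n) ℝ) : fnorm (c • A) = |c| * fnorm A := by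
  rw [fnorm, frobSq_smul, Real.sqrt_mul (sq_nonneg c), Real.sqrt_sq_eq_abs, fnorm]

theorem trace_transpose_mul_sq_le (A B : Matrix (Fin m) (Fin n) ℝ) :
    trace (Aᵀ * B) ^ 2 ≤ frobSq A * frobSq B := by
  simp only [trace_transpose_mul_eq_sum, frobSq, ← Fintype.sum_prod_type']
  exact Finset.sum_mul_sq_le_sq_mul_sq _ _ _

theorem trace_transpose_mul_le_fnorm_mul (A B : Matrix (Fin m) (Fin n) ℝ) :
    trace (Aᵀ * B) ≤ fnorm A * fnorm B := by
  rw [fnorm, fnorm, ← Real.sqrt_mul (frobSq_nonneg A)]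
  exact Real.le_sqrt_of_sq_le (trace_transpose_mul_sq_le A B)

theorem apply_add_le_of_lipschitz_gradient (f : Matrix (Fin m) (Fin n) ℝ → ℝ)
    (gradf : Matrix (Fin m) (Fin n) ℝ → Matrix (Fin m) (Fin n) ℝ) (L : ℝ)
    (hderiv : ∀ W, HasFDerivAt f (traceCLM (gradf W)) W)
    (hlip : ∀ W W', fnorm (gradf W - gradf W') ≤ L * fnorm (W - W'))
    (W V : Matrix (Fin m) (Fin n) ℝ) :
    f (W + V) ≤ f W + trace ((gradf W)ᵀ * V) + L / 2 * frobSq V := by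
  have hline : ∀ t : ℝ, HasDerivAt (fun s : ℝ => f (W + s • V))
      (trace ((gradf (W + t • V))ᵀ * V)) t := fun t =>
    (hderiv _).comp_hasDerivAt t
      ((((hasDerivAt_id t).smul_const V).const_add W).congr_deriv (one_smul ℝ V))
  have := le_add_deriv_add_of_deriv_sub_le hline (K := L * frobSq V) fun t ht => calc
    trace ((gradf (W + t • V))ᵀ * V) - trace ((gradf (W + (0 : ℝ) • V))ᵀ * V)
        = trace ((gradf (W + t • V) - gradf (W + (0 : ℝ) • V))ᵀ * V) := by
          rw [transpose_sub, Matrix.sub_mul, trace_sub]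
      _ ≤ fnorm (gradf (W + t • V) - gradf (W + (0 : ℝ) • V)) * fnorm V :=
          trace_transpose_mul_le_fnorm_mul _ _
      _ ≤ L * fnorm (t • V) * fnorm V := by
          gcongr
          · exact Real.sqrt_nonneg _
          · simpa using hlip (W + t • V) W
      _ = L * frobSq V * t := by
          rw [fnorm_smul, abs_of_pos ht.1, ← fnorm_mul_self]
          ring
  simp only [zero_smul, add_zero, one_smul] at this
  linarith

end Frobenius

theorem young_progress_bound {a b D S L ε : ℝ} (hS : 0 < S) (hL : 0 < L) (hε : 0 < ε)
    (hb : b ^ 2 ≤ D * S) :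
    (1 - ε) / (2 * L) * (a ^ 2 / S) - D / (2 * L * ε) ≤
      a / (L * S) * (a - b) - L / 2 * ((a / (L * S)) ^ 2 * S) := by
  have hyoung : 2 * a * b - ε * a ^ 2 ≤ b ^ 2 / ε := by
    rw [le_div_iff₀ hε]
    nlinarith [sq_nonneg (ε * a - b)]
  have hcs : b ^ 2 / ε ≤ D * S / ε := by gcongr
  calc (1 - ε) / (2 * L) * (a ^ 2 / S) - D / (2 * L * ε)
      = ((1 - ε) * a ^ 2 - D * S / ε) / (2 * L * S) := by field_simp
    _ ≤ (a ^ 2 - 2 * a * b) / (2 * L * S) :=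
        div_le_div_of_nonneg_right (by linarith) (by positivity)
    _ = a / (L * S) * (a - b) - L / 2 * ((a / (L * S)) ^ 2 * S) := by
        field_simp
        ring

theorem htmuon_one_step_progress_general (m n : ℕ)
    (f : Matrix (Fin m) (Fin n) ℝ → ℝ) (gradf : Matrix (Fin m) (Fin n) ℝ → Matrix (Fin m) (Fin n) ℝ)
    (L : ℝ) (hL : 0 < L)
    (hderiv : ∀ W, HasFDerivAt f (traceCLM (gradf W)) W)
    (hlip : ∀ W W', fnorm (gradf W - gradf W') ≤ L * fnorm (W - W'))
    (M : Matrix (Fin m) (Fin n) ℝ)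
    (ρM : Matrix (Fin m) (Fin n) ℝ) (hρ0 : ρM ≠ 0)
    (η : ℝ) (hη : η = Matrix.trace (Mᵀ * ρM) / (L * frobSq ρM))
    (ε' : ℝ) (hε' : ε' ∈ Set.Ioo (0 : ℝ) 1) :
    ∀ W, f W - f (W - η • ρM) ≥
      (1 - ε') / (2 * L) * ((Matrix.trace (Mᵀ * ρM)) ^ (2 : ℕ) / frobSq ρM) -
        frobSq (M - gradf W) / (2 * L * ε') := by
  intro W
  have hdescent := apply_add_le_of_lipschitz_gradient f gradf L hderiv hlip W (-η • ρM)
  have hsplit : trace ((gradf W)ᵀ * ρM) = trace (Mᵀ * ρM) - trace ((M - gradf W)ᵀ * ρM) := by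
    rw [transpose_sub, Matrix.sub_mul, trace_sub, sub_sub_cancel]
  have hyoung := young_progress_bound (a := trace (Mᵀ * ρM)) (frobSq_pos hρ0) hL hε'.1
    (trace_transpose_mul_sq_le (M - gradf W) ρM)
  rw [frobSq_smul, neg_smul, ← sub_eq_add_neg, Matrix.mul_neg, Matrix.mul_smul, trace_neg,
    trace_smul, hsplit] at hdescent
  subst hη
  simp only [smul_eq_mul, neg_sq] at hdescent
  linarith

/-- **One-step HTMuon progress bound with Young's inequality.** Under the same
setting as the one-step descent bound, for any `ε' ∈ (0,1)`:
`f(W) − f(W − η ρ(M)) ≥ (1−ε')/(2L) · ⟨M, ρ(M)⟩²/‖ρ(M)‖_F² − ‖M − ∇f(W)‖_F²/(2Lε')`. -/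
theorem htmuon_one_step_progress (m n : ℕ)
    (f : Matrix (Fin m) (Fin n) ℝ → ℝ) (gradf : Matrix (Fin m) (Fin n) ℝ → Matrix (Fin m) (Fin n) ℝ)
    (L : ℝ) (hL : 0 < L)
    (hderiv : ∀ W, HasFDerivAt f (traceCLM (gradf W)) W)
    (hlip : ∀ W W', fnorm (gradf W - gradf W') ≤ L * fnorm (W - W'))
    (M : Matrix (Fin m) (Fin n) ℝ)
    (U : Matrix (Fin m) (Fin (min m n)) ℝ) (σ : Fin (min m n) → ℝ)
    (V : Matrix (Fin n) (Fin (min m n)) ℝ) (hsvd : IsSVD M U σ V)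
    (p : ℝ) (hp : p ∈ Set.Ioo (0 : ℝ) 1)
    (ρM : Matrix (Fin m) (Fin n) ℝ)
    (hρ : ρM = U * Matrix.diagonal (fun i => σ i ^ p) * Vᵀ) (hρ0 : ρM ≠ 0)
    (η : ℝ) (hη : η = Matrix.trace (Mᵀ * ρM) / (L * frobSq ρM))
    (ε' : ℝ) (hε' : ε' ∈ Set.Ioo (0 : ℝ) 1) :
    ∀ W, f W - f (W - η • ρM) ≥
      (1 - ε') / (2 * L) * ((Matrix.trace (Mᵀ * ρM)) ^ (2 : ℕ) / frobSq ρM) -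
        frobSq (M - gradf W) / (2 * L * ε') :=
  htmuon_one_step_progress_general m n f gradf L hL hderiv hlip M ρM hρ0 η hη ε' hε'
end

section
/- Let f: ℝ^{m×n} → ℝ be L-smooth in Frobenius norm, β ∈ (0,1), p ∈ (0,1), and consider deterministic iterates W_{t+1} = W_t − η_t ρ(M_t) with step sizes η_t ≤ η, where ρ(M) = U Σ^p V^T for the SVD of M and all singular values of every M_t are at most l. Define C_0 = ∇f(W_0), C_t = β C_{t−1} + (1−β) ∇f(W_t). Then ‖∇f(W_t) − C_t‖_F ≤ √r · l^p · β L η / (1 − β), where r = min(m,n). -/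
/-!
Each update moves `W` by `η_t ρ(M_t)`, and since `U` and `V` have orthonormal columns,
`‖U Σ^p Vᵀ‖_F = ‖Σ^p‖_F ≤ √r · l^p`; by `L`-smoothness the gradient therefore moves by at
most `D = L η √r l^p` per step. Writing `∇f(W_{t+1}) − C_{t+1} = β ((∇f(W_t) − C_t) +
(∇f(W_{t+1}) − ∇f(W_t)))`, the error `e_t` obeys `e_{t+1} ≤ β (e_t + D)` with `e_0 = 0`, and
so never exceeds the fixed point `β D / (1 − β)` of this recursion.
-/

open Matrix

attribute [local instance] Matrix.frobeniusNormedAddCommGroup Matrix.frobeniusNormedSpace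

section Frobenius

variable {m n k : Type*} [Fintype m] [Fintype n] [Fintype k]

theorem frobenius_norm_sq_eq_trace (A : Matrix m n ℝ) : ‖A‖ ^ 2 = trace (Aᵀ * A) := by
  rw [frobenius_norm_def, ← Real.sqrt_eq_rpow, Real.sq_sqrt (by positivity), trace,
    Finset.sum_comm]
  simp [mul_apply, sq]

theorem frobenius_norm_mul_of_transpose_mul_self_eq_one [DecidableEq k] {U : Matrix m k ℝ}
    (hU : Uᵀ * U = 1) (A : Matrix k n ℝ) : ‖U * A‖ = ‖A‖ := by
  refine (pow_left_inj₀ (norm_nonneg _) (norm_nonneg _) two_ne_zero).1 ?_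
  rw [frobenius_norm_sq_eq_trace, frobenius_norm_sq_eq_trace, transpose_mul, Matrix.mul_assoc,
    ← Matrix.mul_assoc Uᵀ, hU, Matrix.one_mul]

theorem frobenius_norm_mul_transpose_of_transpose_mul_self_eq_one [DecidableEq k]
    {V : Matrix n k ℝ} (hV : Vᵀ * V = 1) (A : Matrix m k ℝ) : ‖A * Vᵀ‖ = ‖A‖ := by
  rw [← frobenius_norm_transpose, transpose_mul, transpose_transpose,
    frobenius_norm_mul_of_transpose_mul_self_eq_one hV, frobenius_norm_transpose]

theorem frobenius_norm_diagonal_le [DecidableEq n] {d : n → ℝ} {c : ℝ} (hc : 0 ≤ c)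
    (hd : ∀ i, |d i| ≤ c) : ‖diagonal d‖ ≤ √(Fintype.card n) * c := by
  rw [frobenius_norm_diagonal, EuclideanSpace.norm_eq, ← Real.sqrt_sq hc,
    ← Real.sqrt_mul (by positivity)]
  refine Real.sqrt_le_sqrt ?_
  calc ∑ i, ‖d i‖ ^ 2 ≤ ∑ _i : n, c ^ 2 :=
        Finset.sum_le_sum fun i _ => pow_le_pow_left₀ (norm_nonneg _) (hd i) 2
    _ = Fintype.card n * c ^ 2 := by simp

end Frobenius

theorem fnorm_eq_norm {m n : ℕ} (A : Matrix (Fin m) (Fin n) ℝ) : fnorm A = ‖A‖ := by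
  simp [fnorm, frobSq, frobenius_norm_def, Real.sqrt_eq_rpow]

theorem IsSVD.norm_mul_diagonal_rpow_mul_transpose_le {m n r : ℕ}
    {M : Matrix (Fin m) (Fin n) ℝ} {U : Matrix (Fin m) (Fin r) ℝ} {σ : Fin r → ℝ}
    {V : Matrix (Fin n) (Fin r) ℝ} (hM : IsSVD M U σ V) {p l : ℝ} (hp : 0 ≤ p) (hl : 0 ≤ l)
    (hσ : ∀ i, σ i ≤ l) :
    ‖U * diagonal (fun i => σ i ^ p) * Vᵀ‖ ≤ √r * l ^ p := by
  obtain ⟨hU, hV, hσ₀, -, -⟩ := hM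
  rw [frobenius_norm_mul_transpose_of_transpose_mul_self_eq_one hV,
    frobenius_norm_mul_of_transpose_mul_self_eq_one hU]
  have hdiag := frobenius_norm_diagonal_le (d := fun i => σ i ^ p) (Real.rpow_nonneg hl p)
    fun i => by
      rw [abs_of_nonneg (Real.rpow_nonneg (hσ₀ i) p)]
      exact Real.rpow_le_rpow (hσ₀ i) (hσ i) hp
  rwa [Fintype.card_fin] at hdiag

theorem norm_sub_momentum_le {E : Type*} [SeminormedAddCommGroup E] [NormedSpace ℝ E]
    {β : ℝ} (hβ : 0 ≤ β) (c g g' : E) :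
    ‖g' - (β • c + (1 - β) • g')‖ ≤ β * (‖g - c‖ + ‖g' - g‖) := by
  have hsplit : g' - (β • c + (1 - β) • g') = β • ((g - c) + (g' - g)) := by module
  rw [hsplit, norm_smul, Real.norm_of_nonneg hβ]
  exact mul_le_mul_of_nonneg_left (norm_add_le _ _) hβ

theorem le_mul_div_one_sub_of_le_mul_add {e : ℕ → ℝ} {β D : ℝ} (hβ₀ : 0 ≤ β) (hβ₁ : β < 1)
    (h0 : e 0 ≤ β * D / (1 - β)) (hsucc : ∀ t, e (t + 1) ≤ β * (e t + D)) (t : ℕ) :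
    e t ≤ β * D / (1 - β) := by
  induction t with
  | zero => exact h0
  | succ t ih =>
    have hfix : β * (β * D / (1 - β) + D) = β * D / (1 - β) := by
      field_simp [(sub_pos.2 hβ₁).ne']
      ring
    calc e (t + 1) ≤ β * (e t + D) := hsucc t
      _ ≤ β * (β * D / (1 - β) + D) := by gcongr
      _ = β * D / (1 - β) := hfix

theorem momentum_tracking_error_general (m n : ℕ) (L β p η l : ℝ)
    (hL : 0 ≤ L) (hβ : β ∈ Set.Ioo (0 : ℝ) 1) (hp : p ∈ Set.Ioo (0 : ℝ) 1)
    (hl : 0 ≤ l)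
    (gradf : Matrix (Fin m) (Fin n) ℝ → Matrix (Fin m) (Fin n) ℝ)
    (hlip : ∀ W W', fnorm (gradf W - gradf W') ≤ L * fnorm (W - W'))
    (M W C : ℕ → Matrix (Fin m) (Fin n) ℝ)
    (U : ℕ → Matrix (Fin m) (Fin (min m n)) ℝ) (σ : ℕ → Fin (min m n) → ℝ)
    (V : ℕ → Matrix (Fin n) (Fin (min m n)) ℝ)
    (hsvd : ∀ t, IsSVD (M t) (U t) (σ t) (V t))
    (hσl : ∀ t i, σ t i ≤ l)
    (ηt : ℕ → ℝ) (hηt : ∀ t, 0 ≤ ηt t ∧ ηt t ≤ η)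
    (hW : ∀ t, W (t + 1) =
      W t - ηt t • (U t * Matrix.diagonal (fun i => σ t i ^ p) * (V t)ᵀ))
    (hC0 : C 0 = gradf (W 0))
    (hCrec : ∀ t, C (t + 1) = β • C t + (1 - β) • gradf (W (t + 1))) :
    ∀ t, fnorm (gradf (W t) - C t) ≤
      Real.sqrt (min m n : ℝ) * l ^ p * β * L * η / (1 - β) := by
  simp only [fnorm_eq_norm] at hlip ⊢
  set D := L * (η * (√(min m n : ℝ) * l ^ p))
  have hW_step (t : ℕ) : ‖W (t + 1) - W t‖ ≤ η * (√(min m n : ℝ) * l ^ p) := by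
    have hρ := (hsvd t).norm_mul_diagonal_rpow_mul_transpose_le hp.1.le hl (hσl t)
    rw [hW t, sub_sub_cancel_left, norm_neg, norm_smul, Real.norm_of_nonneg (hηt t).1,
      ← Nat.cast_min]
    exact mul_le_mul (hηt t).2 hρ (norm_nonneg _) ((hηt t).1.trans (hηt t).2)
  have hgrad_step (t : ℕ) : ‖gradf (W (t + 1)) - gradf (W t)‖ ≤ D :=
    (hlip _ _).trans (mul_le_mul_of_nonneg_left (hW_step t) hL)
  have hD : 0 ≤ D := (norm_nonneg _).trans (hgrad_step 0)
  have herr_zero : ‖gradf (W 0) - C 0‖ ≤ β * D / (1 - β) := by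
    rw [hC0, sub_self, norm_zero]
    exact div_nonneg (mul_nonneg hβ.1.le hD) (sub_nonneg.2 hβ.2.le)
  have herr_succ (t : ℕ) :
      ‖gradf (W (t + 1)) - C (t + 1)‖ ≤ β * (‖gradf (W t) - C t‖ + D) := by
    rw [hCrec t]
    refine (norm_sub_momentum_le hβ.1.le _ (gradf (W t)) _).trans ?_
    gcongr
    exacts [hβ.1.le, hgrad_step t]
  intro t
  calc ‖gradf (W t) - C t‖ ≤ β * D / (1 - β) :=
        le_mul_div_one_sub_of_le_mul_add (e := fun t => ‖gradf (W t) - C t‖) hβ.1.le hβ.2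
          herr_zero herr_succ t
    _ = √(min m n : ℝ) * l ^ p * β * L * η / (1 - β) := by ring

/-- **Momentum tracking error for deterministic HTMuon.** Let `∇f` be
`L`-Lipschitz in Frobenius norm, `β, p ∈ (0,1)`, iterates
`W_{t+1} = W_t − η_t ρ(M_t)` with `ρ(M) = U Σ^p Vᵀ`, `η_t ≤ η`, all singular
values of every `M_t` bounded by `l`, and `C₀ = ∇f(W₀)`,
`C_t = β C_{t−1} + (1−β) ∇f(W_t)`. Then
`‖∇f(W_t) − C_t‖_F ≤ √r · l^p · β L η / (1 − β)` with `r = min(m,n)`. -/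
theorem momentum_tracking_error (m n : ℕ) (L β p η l : ℝ)
    (hL : 0 ≤ L) (hβ : β ∈ Set.Ioo (0 : ℝ) 1) (hp : p ∈ Set.Ioo (0 : ℝ) 1)
    (hη : 0 ≤ η) (hl : 0 ≤ l)
    (gradf : Matrix (Fin m) (Fin n) ℝ → Matrix (Fin m) (Fin n) ℝ)
    (hlip : ∀ W W', fnorm (gradf W - gradf W') ≤ L * fnorm (W - W'))
    (M W C : ℕ → Matrix (Fin m) (Fin n) ℝ)
    (U : ℕ → Matrix (Fin m) (Fin (min m n)) ℝ) (σ : ℕ → Fin (min m n) → ℝ)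
    (V : ℕ → Matrix (Fin n) (Fin (min m n)) ℝ)
    (hsvd : ∀ t, IsSVD (M t) (U t) (σ t) (V t))
    (hσl : ∀ t i, σ t i ≤ l)
    (ηt : ℕ → ℝ) (hηt : ∀ t, 0 ≤ ηt t ∧ ηt t ≤ η)
    (hW : ∀ t, W (t + 1) =
      W t - ηt t • (U t * Matrix.diagonal (fun i => σ t i ^ p) * (V t)ᵀ))
    (hC0 : C 0 = gradf (W 0))
    (hCrec : ∀ t, C (t + 1) = β • C t + (1 - β) • gradf (W (t + 1))) :
    ∀ t, fnorm (gradf (W t) - C t) ≤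
      Real.sqrt (min m n : ℝ) * l ^ p * β * L * η / (1 - β) :=
  momentum_tracking_error_general m n L β p η l hL hβ hp hl gradf hlip M W C U σ V hsvd hσl ηt hηt
    hW hC0 hCrec
end
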